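/- arXiv:math/9804153 — 2 statements merged into one kernel-verified Lean document; each statement's English description precedes it below -/
import Mathlib

section
/- 𝔰𝔱 ≤ 𝔰𝔱_{𝔰𝔱} ≤ 𝔰𝔱'. -/
open Cardinal Set

/-- `X` is a `𝔰𝔱_l`-family on (the canonical type of order type) `l`:
a collection of countably infinite subsets of `l` such that every subset of
cardinality `ℵ₁` contains a member of `X`. -/
def IsStickFam (l : Cardinal) (X : Set (Set l.ord.ToType)) : Prop :=
  (∀ x ∈ X, #x = ℵ₀) ∧
    ∀ y : Set l.ord.ToType, #y = aleph 1 → ∃ x ∈ X, x ⊆ y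

/-- The cardinal `𝔰𝔱_l`. -/
noncomputable def stickL (l : Cardinal) : Cardinal :=
  sInf {c | ∃ X : Set (Set l.ord.ToType), IsStickFam l X ∧ #X = c}

/-- The cardinal `𝔰𝔱` (`= 𝔰𝔱_{ℵ₁}`). -/
noncomputable def stick : Cardinal := stickL (aleph 1)

/-- The cardinal `𝔰𝔱'`: the least `κ ≥ ℵ₁` carrying a stick family of size `κ`. -/
noncomputable def stick' : Cardinal :=
  sInf {k | aleph 1 ≤ k ∧ ∃ X : Set (Set k.ord.ToType), IsStickFam k X ∧ #X = k}

/-! Pulling a stick family back along an embedding shows that `𝔰𝔱_λ` is monotone in `λ`. Since a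
countable family of countable sets misses an `ℵ₁`-sized set, `ℵ₁ ≤ 𝔰𝔱`, and monotonicity gives
`𝔰𝔱 ≤ 𝔰𝔱_𝔰𝔱`. The definition of `𝔰𝔱'` gives `𝔰𝔱_𝔰𝔱' ≤ 𝔰𝔱'` (it is a genuine minimum, as `𝔠`
carries the family of all its countably infinite subsets, of size `𝔠 ^ ℵ₀ = 𝔠`); with
monotonicity this yields `𝔰𝔱 ≤ 𝔰𝔱'` and then `𝔰𝔱_𝔰𝔱 ≤ 𝔰𝔱_𝔰𝔱' ≤ 𝔰𝔱'`. -/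

universe u

lemma mk_setOf_mk_eq_aleph0_le_pow (α : Type*) [Infinite α] :
    #{x : Set α | #x = ℵ₀} ≤ #α ^ ℵ₀ :=
  calc #{x : Set α | #x = ℵ₀} ≤ #{x : Set α | #x ≤ ℵ₀} :=
        mk_le_mk_of_subset fun _ hx => le_of_eq hx
    _ ≤ #α ^ ℵ₀ := mk_bounded_set_le_of_infinite α ℵ₀

lemma mk_le_mk_setOf_mk_eq_aleph0 (α : Type*) [Infinite α] :
    #α ≤ #{x : Set α | #x = ℵ₀} := by
  obtain ⟨e⟩ : Nonempty (α × ℕ ≃ α) := Cardinal.eq.mp (by simp)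
  have hinj (a : α) : Function.Injective fun n => e (a, n) :=
    e.injective.comp (Prod.mk_right_injective a)
  refine mk_le_of_injective (f := fun a => ⟨range fun n => e (a, n), ?_⟩) fun a b hab => ?_
  · simpa using mk_range_eq_of_injective (hinj a)
  · have hrange : (range fun n => e (a, n)) = range fun n => e (b, n) :=
      congrArg Subtype.val hab
    obtain ⟨n, hn⟩ : e (a, 0) ∈ range fun n => e (b, n) := hrange ▸ mem_range_self 0
    exact (congrArg Prod.fst (e.injective hn)).symm

lemma mk_setOf_mk_eq_aleph0_of_pow_aleph0 {κ : Cardinal} (hκ : ℵ₀ ≤ κ) (hpow : κ ^ ℵ₀ = κ) :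
    #{x : Set κ.ord.ToType | #x = ℵ₀} = κ := by
  have : Infinite κ.ord.ToType := by rwa [Cardinal.infinite_iff, mk_ord_toType]
  refine le_antisymm ?_ ?_
  · simpa [mk_ord_toType, hpow] using mk_setOf_mk_eq_aleph0_le_pow κ.ord.ToType
  · simpa [mk_ord_toType] using mk_le_mk_setOf_mk_eq_aleph0 κ.ord.ToType

lemma isStickFam_setOf_mk_eq_aleph0 (l : Cardinal) :
    IsStickFam l {x : Set l.ord.ToType | #x = ℵ₀} := by
  refine ⟨fun x hx => hx, fun y hy => ?_⟩
  obtain ⟨x, hxy, hx⟩ := le_mk_iff_exists_subset.mp (hy ▸ aleph0_le_aleph 1 : ℵ₀ ≤ #y)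
  exact ⟨x, hx, hxy⟩

lemma stickL_le_mk {l : Cardinal} {X : Set (Set l.ord.ToType)} (hX : IsStickFam l X) :
    stickL l ≤ #X :=
  csInf_le' (show #X ∈ {c | ∃ X, IsStickFam l X ∧ #X = c} from ⟨X, hX, rfl⟩)

lemma exists_isStickFam_mk_eq_stickL (l : Cardinal) :
    ∃ X : Set (Set l.ord.ToType), IsStickFam l X ∧ #X = stickL l :=
  csInf_mem (s := {c | ∃ X : Set (Set l.ord.ToType), IsStickFam l X ∧ #X = c})
    ⟨_, _, isStickFam_setOf_mk_eq_aleph0 l, rfl⟩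

lemma IsStickFam.preimage {μ l : Cardinal.{u}} {X : Set (Set l.ord.ToType)} (hX : IsStickFam l X)
    (f : μ.ord.ToType ↪ l.ord.ToType) :
    IsStickFam μ ((f ⁻¹' ·) '' {x ∈ X | x ⊆ range f}) := by
  obtain ⟨hX_count, hX_sub⟩ := hX
  constructor
  · rintro _ ⟨x, ⟨hxX, hxf⟩, rfl⟩
    rw [mk_preimage_of_injective_of_subset_range f x f.injective hxf, hX_count x hxX]
  · intro y hy
    obtain ⟨x, hxX, hxy⟩ := hX_sub (f '' y) (by rw [mk_image_eq f.injective, hy])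
    refine ⟨f ⁻¹' x, ⟨x, ⟨hxX, hxy.trans (image_subset_range f y)⟩, rfl⟩, ?_⟩
    rw [← preimage_image_eq y f.injective]
    exact preimage_mono hxy

lemma stickL_mono {μ l : Cardinal.{u}} (h : μ ≤ l) : stickL μ ≤ stickL l := by
  obtain ⟨X, hX, hX_card⟩ := exists_isStickFam_mk_eq_stickL l
  obtain ⟨f⟩ : Nonempty (μ.ord.ToType ↪ l.ord.ToType) := by
    rwa [← Cardinal.le_def, mk_ord_toType, mk_ord_toType]
  calc stickL μ ≤ #((f ⁻¹' ·) '' {x ∈ X | x ⊆ range f}) := stickL_le_mk (hX.preimage f)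
    _ ≤ #{x ∈ X | x ⊆ range f} := mk_image_le
    _ ≤ #X := mk_le_mk_of_subset (sep_subset _ _)
    _ = stickL l := hX_card

lemma aleph_one_le_stick : ℵ₁ ≤ stick := by
  obtain ⟨X, ⟨hX_count, hX_sub⟩, hX_card⟩ := exists_isStickFam_mk_eq_stickL ℵ₁
  rw [← succ_aleph0, Order.succ_le_iff]
  by_contra! h
  have hU : (⋃₀ X).Countable :=
    (le_aleph0_iff_set_countable.mp (hX_card ▸ h)).sUnion fun x hx =>
      le_aleph0_iff_set_countable.mp (hX_count x hx).le
  have : Infinite (ℵ₁ : Cardinal).ord.ToType := by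
    rw [Cardinal.infinite_iff, mk_ord_toType]; exact aleph0_le_aleph 1
  have hU_compl : #((⋃₀ X)ᶜ : Set (ℵ₁ : Cardinal).ord.ToType) = ℵ₁ := by
    rw [mk_compl_of_infinite _ (by rw [mk_ord_toType]; exact
      (le_aleph0_iff_set_countable.mpr hU).trans_lt aleph0_lt_aleph_one), mk_ord_toType]
  obtain ⟨x, hxX, hxU⟩ := hX_sub _ hU_compl
  obtain ⟨⟨a, ha⟩⟩ := mk_ne_zero_iff.mp (hX_count x hxX ▸ aleph0_ne_zero)
  exact hxU ha (mem_sUnion_of_mem ha hxX)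

lemma stick'_spec :
    ℵ₁ ≤ stick'.{u} ∧
      ∃ X : Set (Set stick'.{u}.ord.ToType), IsStickFam stick' X ∧ #X = stick'.{u} :=
  csInf_mem
    (s := {k | ℵ₁ ≤ k ∧ ∃ X : Set (Set k.ord.ToType), IsStickFam k X ∧ #X = k})
    ⟨continuum, aleph_one_le_continuum, _, isStickFam_setOf_mk_eq_aleph0 _,
    mk_setOf_mk_eq_aleph0_of_pow_aleph0 aleph0_le_continuum continuum_power_aleph0⟩

lemma stickL_stick'_le : stickL stick'.{u} ≤ stick' := by
  obtain ⟨-, X, hX, hX_card⟩ := stick'_spec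
  exact (stickL_le_mk hX).trans_eq hX_card

theorem stick_le_stickL_stick_le_stick' :
    stick ≤ stickL stick ∧ stickL stick ≤ stick' := by
  have h_stick_le : stick ≤ stick' := (stickL_mono stick'_spec.1).trans stickL_stick'_le
  exact ⟨stickL_mono aleph_one_le_stick, (stickL_mono h_stick_le).trans stickL_stick'_le⟩
end

section
/- ♣_w and ♣_w† are equivalent; indeed, every ♣_w-sequence is already a ♣_w†-sequence. -/
open Cardinal Set

/-- The first uncountable ordinal. -/
noncomputable def ω₁ : Ordinal := (aleph 1).ord

/-- The set of limit ordinals below `ω₁`. -/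
def LimOmega1 : Set Ordinal := {γ | γ < ω₁ ∧ Order.IsSuccLimit γ}

/-- `C` is a club (closed unbounded) subset of `ω₁`. -/
def IsClubIn (C : Set Ordinal) : Prop :=
  C ⊆ Iio ω₁ ∧
    (∀ δ, δ < ω₁ → δ ≠ 0 → (∀ α < δ, ∃ β ∈ C, α < β ∧ β < δ) → δ ∈ C) ∧
    (∀ α < ω₁, ∃ β ∈ C, α < β)

/-- `S` is a stationary subset of `ω₁`: it meets every club subset of `ω₁`. -/
def IsStatIn (S : Set Ordinal) : Prop :=
  S ⊆ Iio ω₁ ∧ ∀ C, IsClubIn C → (S ∩ C).Nonempty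

/-- The set of ordinals `s` has order type `ω`. -/
def HasOtpOmega (s : Set Ordinal) : Prop :=
  Ordinal.type (Subrel ((· < ·) : Ordinal → Ordinal → Prop) (· ∈ s)) = Ordinal.omega0

/-- `x γ` is a cofinal subset of `γ` of order type `ω`. -/
def IsLadderAt (γ : Ordinal) (s : Set Ordinal) : Prop :=
  s ⊆ Iio γ ∧ (∀ α < γ, ∃ β ∈ s, α ≤ β) ∧ HasOtpOmega s

/-- `(x γ)_{γ ∈ Lim(ω₁)}` is a `♣_w`-sequence. -/
def ClubWSeq (x : Ordinal → Set Ordinal) : Prop :=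
  (∀ γ ∈ LimOmega1, IsLadderAt γ (x γ)) ∧
    ∀ y : Set Ordinal, y ⊆ Iio ω₁ → #y = aleph 1 →
      ∃ γ ∈ LimOmega1, (x γ \ y).Finite

/-- `(x γ)_{γ ∈ Lim(ω₁)}` is a `♣_w†`-sequence. -/
def ClubWDaggerSeq (x : Ordinal → Set Ordinal) : Prop :=
  (∀ γ ∈ LimOmega1, IsLadderAt γ (x γ)) ∧
    ∀ y : Set Ordinal, y ⊆ Iio ω₁ → #y = aleph 1 →
      IsStatIn {γ ∈ LimOmega1 | (x γ \ y).Finite}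

/-!
Given `y` of size `ℵ₁` and a club `C`, thin `y` out to `nextAbove C y`: the points of `y` that
are the least element of `y` above some point of `C`. This set is still unbounded in `ω₁`, hence of
size `ℵ₁`, and between any point of `y` and a larger point of `nextAbove C y` lies a point of `C`.
So if a ladder `x γ` is almost contained in `nextAbove C y`, then `γ` is a limit of points of `C`,
hence `γ ∈ C`: applying `♣_w` to `nextAbove C y` yields a guessing point inside every club.

The sequences quantified over in the statement live in unrelated universes; existence of a
`♣_w`-sequence does not depend on the universe, because `Ordinal.lift` is an isomorphism below `ω₁`.
-/

open Order

universe u v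

lemma isSuccLimit_omega1 : IsSuccLimit ω₁ := Cardinal.isSuccLimit_ord (aleph0_le_aleph 1)

lemma lift_omega1 : Ordinal.lift.{v} ω₁.{u} = ω₁ := by
  rw [ω₁, Cardinal.lift_ord, Cardinal.lift_aleph, Ordinal.lift_one]
  rfl

lemma mk_Iio_lt_aleph_one {α : Ordinal.{u}} (hα : α < ω₁) : #(Iio α) < aleph 1 := by
  rw [Cardinal.mk_Iio_ordinal, lt_aleph_one_iff, lift_le_aleph0, ← lt_aleph_one_iff]
  exact Cardinal.lt_ord.1 hα

lemma mk_le_aleph_one {s : Set Ordinal.{u}} (hs : s ⊆ Iio ω₁) : #s ≤ aleph 1 := by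
  refine (mk_le_mk_of_subset hs).trans ?_
  rw [Cardinal.mk_Iio_ordinal, ω₁, Cardinal.card_ord, Cardinal.lift_aleph, Ordinal.lift_one]

lemma mk_lt_aleph_one_iff_bddAbove {s : Set Ordinal.{u}} (hs : s ⊆ Iio ω₁) :
    #s < aleph 1 ↔ ∃ α < ω₁, ∀ β ∈ s, β ≤ α := by
  constructor
  · intro h
    have : Countable s := (le_aleph0_iff_set_countable.1 (lt_aleph_one_iff.1 h)).to_subtype
    refine ⟨⨆ β : s, β.1, ?_, fun β hβ => Ordinal.le_iSup (fun β : s => β.1) ⟨β, hβ⟩⟩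
    rw [ω₁, Cardinal.ord_aleph] at hs ⊢
    exact Ordinal.iSup_lt_omega_one fun β => hs β.2
  · rintro ⟨α, hα, hs⟩
    exact (mk_le_mk_of_subset fun β hβ => lt_succ_iff.2 (hs β hβ)).trans_lt
      (mk_Iio_lt_aleph_one (isSuccLimit_omega1.succ_lt hα))

lemma mk_eq_aleph_one_iff_unbounded {s : Set Ordinal.{u}} (hs : s ⊆ Iio ω₁) :
    #s = aleph 1 ↔ ∀ α < ω₁, ∃ β ∈ s, α < β := by
  rw [← not_iff_not, ← ne_eq, ← (mk_le_aleph_one hs).lt_iff_ne, mk_lt_aleph_one_iff_bddAbove hs]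
  push Not
  rfl

section NextAbove

variable {α : Type*} [LinearOrder α]

def nextAbove (C y : Set α) : Set α := {β ∈ y | ∃ c ∈ C, c < β ∧ ∀ z ∈ y, c < z → β ≤ z}

lemma nextAbove_subset (C y : Set α) : nextAbove C y ⊆ y := sep_subset _ _

lemma exists_mem_nextAbove_gt [WellFoundedLT α] {C y : Set α} {c z : α} (hc : c ∈ C)
    (hz : z ∈ y) (hcz : c < z) : ∃ β ∈ nextAbove C y, c < β := by
  obtain ⟨β, ⟨hβy, hcβ⟩, hmin⟩ := wellFounded_lt.has_min {z ∈ y | c < z} ⟨z, hz, hcz⟩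
  exact ⟨β, ⟨hβy, c, hc, hcβ, fun z hz hcz => not_lt.1 (hmin z ⟨hz, hcz⟩)⟩, hcβ⟩

lemma exists_mem_Ico_of_lt_mem_nextAbove {C y : Set α} {β β' : α} (hβ : β ∈ y)
    (hβ' : β' ∈ nextAbove C y) (hlt : β < β') : ∃ c ∈ C, c ∈ Ico β β' := by
  obtain ⟨-, c, hc, hcβ', hleast⟩ := hβ'
  exact ⟨c, hc, not_lt.1 fun hβc => (hleast β hβ hβc).not_gt hlt, hcβ'⟩

end NextAbove

lemma exists_mem_inter_gt_of_finite_diff {γ : Ordinal} (hγ : IsSuccLimit γ) {s t : Set Ordinal}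
    (hsγ : s ⊆ Iio γ) (hcof : ∀ α < γ, ∃ β ∈ s, α ≤ β) (hfin : (s \ t).Finite) :
    ∀ α < γ, ∃ β ∈ s ∩ t, α < β := by
  intro α hα
  have hδ : max (succ α) (hfin.toFinset.sup succ) < γ :=
    max_lt (hγ.succ_lt hα) <| (Finset.sup_lt_iff hγ.bot_lt).2 fun f hf =>
      hγ.succ_lt (hsγ (hfin.mem_toFinset.1 hf).1)
  obtain ⟨β, hβs, hδβ⟩ := hcof _ hδ
  refine ⟨β, ⟨hβs, not_not.1 fun hβt => ?_⟩, (lt_succ α).trans_le ((le_max_left _ _).trans hδβ)⟩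
  have : succ β ≤ hfin.toFinset.sup succ := Finset.le_sup (hfin.mem_toFinset.2 ⟨hβs, hβt⟩)
  exact (lt_succ β).not_ge (this.trans ((le_max_right _ _).trans hδβ))

lemma IsClubIn.mem_of_cofinal_nextAbove {C : Set Ordinal} (hC : IsClubIn C) (y : Set Ordinal)
    {γ : Ordinal} (hγ : γ ∈ LimOmega1) (hcof : ∀ α < γ, ∃ β ∈ nextAbove C y, α < β ∧ β < γ) :
    γ ∈ C := by
  refine hC.2.1 γ hγ.1 hγ.2.bot_lt.ne' fun α hα => ?_
  obtain ⟨β, hβ, hαβ, hβγ⟩ := hcof α hα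
  obtain ⟨β', hβ', hββ', hβ'γ⟩ := hcof β hβγ
  obtain ⟨c, hc, hβc, hcβ'⟩ := exists_mem_Ico_of_lt_mem_nextAbove (nextAbove_subset C y hβ) hβ' hββ'
  exact ⟨c, hc, hαβ.trans_le hβc, hcβ'.trans hβ'γ⟩

theorem ClubWSeq.clubWDaggerSeq {x : Ordinal → Set Ordinal} (hx : ClubWSeq x) :
    ClubWDaggerSeq x := by
  refine ⟨hx.1, fun y hy hcard => ⟨fun γ hγ => hγ.1.1, fun C hC => ?_⟩⟩
  have hsub : nextAbove C y ⊆ Iio ω₁ := (nextAbove_subset C y).trans hy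
  have hunb : ∀ α < ω₁, ∃ β ∈ nextAbove C y, α < β := by
    intro α hα
    obtain ⟨c, hc, hαc⟩ := hC.2.2 α hα
    obtain ⟨z, hz, hcz⟩ := (mk_eq_aleph_one_iff_unbounded hy).1 hcard c (hC.1 hc)
    obtain ⟨β, hβ, hcβ⟩ := exists_mem_nextAbove_gt hc hz hcz
    exact ⟨β, hβ, hαc.trans hcβ⟩
  obtain ⟨γ, hγ, hfin⟩ := hx.2 _ hsub ((mk_eq_aleph_one_iff_unbounded hsub).2 hunb)
  obtain ⟨hxγ, hcof, -⟩ := hx.1 γ hγ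
  refine ⟨γ, ⟨hγ, hfin.subset (sdiff_subset_sdiff_right (nextAbove_subset C y))⟩,
    hC.mem_of_cofinal_nextAbove y hγ fun α hα => ?_⟩
  obtain ⟨β, ⟨hβx, hβ⟩, hαβ⟩ := exists_mem_inter_gt_of_finite_diff hγ.2 hxγ hcof hfin α hα
  exact ⟨β, hβ, hαβ, hxγ hβx⟩

section Lift

theorem Ordinal.lift_strictMono : StrictMono Ordinal.lift.{v, u} := fun _ _ => Ordinal.lift_lt.2

theorem Ordinal.lift_injective : Function.Injective Ordinal.lift.{v, u} :=
  Ordinal.lift_strictMono.injective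

lemma image_lift_Iio (γ : Ordinal.{u}) : Ordinal.lift.{v} '' Iio γ = Iio (Ordinal.lift.{v} γ) := by
  ext Γ
  exact Ordinal.lt_lift_iff.symm

lemma image_lift_Iio_omega1 : Ordinal.lift.{v} '' Iio ω₁.{u} = Iio ω₁ := by
  rw [image_lift_Iio, lift_omega1]

lemma mem_limOmega1_lift_iff {γ : Ordinal.{u}} :
    Ordinal.lift.{v} γ ∈ LimOmega1 ↔ γ ∈ LimOmega1 := by
  rw [LimOmega1, LimOmega1, mem_ofPred_eq, mem_ofPred_eq, ← lift_omega1.{u, v}, Ordinal.lift_lt,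
    Ordinal.isSuccLimit_lift]

lemma image_lift_limOmega1 : Ordinal.lift.{v} '' LimOmega1.{u} = LimOmega1 := by
  refine Subset.antisymm (image_subset_iff.2 fun γ => mem_limOmega1_lift_iff.2) fun Γ hΓ => ?_
  obtain ⟨γ, -, rfl⟩ : Γ ∈ Ordinal.lift.{v} '' Iio ω₁.{u} := image_lift_Iio_omega1.symm ▸ hΓ.1
  exact ⟨γ, mem_limOmega1_lift_iff.1 hΓ, rfl⟩

lemma hasOtpOmega_image_lift_iff {s : Set Ordinal.{u}} :
    HasOtpOmega (Ordinal.lift.{v} '' s) ↔ HasOtpOmega s := by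
  have e := (Ordinal.lift_strictMono.{u, v}.strictMonoOn s).orderIso
  have key := Ordinal.lift_type_eq.{u + 1, max u v + 1, 0}.2 ⟨e.toRelIsoLT⟩
  rw [HasOtpOmega, HasOtpOmega, ← Ordinal.lift_inj.{u + 1},
    ← Ordinal.lift_inj.{max u v + 1} (a := Ordinal.type _), Ordinal.lift_omega0,
    Ordinal.lift_omega0]
  exact key ▸ Iff.rfl

lemma isLadderAt_lift_iff {γ : Ordinal.{u}} {s : Set Ordinal.{u}} :
    IsLadderAt (Ordinal.lift.{v} γ) (Ordinal.lift.{v} '' s) ↔ IsLadderAt γ s := by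
  refine and_congr ?_ (and_congr ?_ hasOtpOmega_image_lift_iff)
  · rw [← image_lift_Iio, image_subset_image_iff Ordinal.lift_injective]
  · constructor
    · intro h α hα
      obtain ⟨_, ⟨β, hβ, rfl⟩, hαβ⟩ := h _ (Ordinal.lift_lt.2 hα)
      exact ⟨β, hβ, Ordinal.lift_le.1 hαβ⟩
    · intro h α hα
      obtain ⟨a, ha, rfl⟩ := Ordinal.lt_lift_iff.1 hα
      obtain ⟨β, hβ, hαβ⟩ := h a ha
      exact ⟨_, mem_image_of_mem _ hβ, Ordinal.lift_le.2 hαβ⟩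

lemma mk_image_lift_eq_aleph_one_iff {s : Set Ordinal.{u}} :
    #(Ordinal.lift.{v} '' s) = aleph 1 ↔ #s = aleph 1 := by
  rw [← Cardinal.lift_inj (a := #(Ordinal.lift.{v} '' s)),
    Cardinal.mk_image_eq_lift _ _ Ordinal.lift_injective]
  simp

lemma clubWSeq_iff_of_image_lift {x : Ordinal.{u} → Set Ordinal.{u}}
    {X : Ordinal.{max u v} → Set Ordinal.{max u v}}
    (h : ∀ γ ∈ LimOmega1, X (Ordinal.lift.{v} γ) = Ordinal.lift.{v} '' x γ) :
    ClubWSeq X ↔ ClubWSeq x := by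
  rw [ClubWSeq, ClubWSeq, ← image_lift_limOmega1.{u, v}, ← image_lift_Iio_omega1.{u, v},
    forall_mem_image, forall_subset_image_iff]
  refine and_congr (forall₂_congr fun γ hγ => ?_)
    (forall₂_congr fun y _ => imp_congr mk_image_lift_eq_aleph_one_iff ?_)
  · rw [h γ hγ, isLadderAt_lift_iff]
  · rw [exists_mem_image]
    refine exists_congr fun γ => and_congr_right fun hγ => ?_
    rw [h γ hγ, ← image_sdiff Ordinal.lift_injective, finite_image_iff Ordinal.lift_injective.injOn]

lemma exists_clubWSeq_iff_lift :
    (∃ x : Ordinal.{u} → Set Ordinal.{u}, ClubWSeq x) ↔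
      ∃ X : Ordinal.{max u v} → Set Ordinal.{max u v}, ClubWSeq X := by
  constructor
  · rintro ⟨x, hx⟩
    refine ⟨Function.extend Ordinal.lift.{v} (fun γ => Ordinal.lift.{v} '' x γ) fun _ => ∅, ?_⟩
    exact (clubWSeq_iff_of_image_lift fun γ _ => Ordinal.lift_injective.extend_apply _ _ γ).2 hx
  · rintro ⟨X, hX⟩
    refine ⟨fun γ => Ordinal.lift.{v} ⁻¹' X (Ordinal.lift.{v} γ),
      (clubWSeq_iff_of_image_lift fun γ hγ => ?_).1 hX⟩
    have hXγ := (hX.1 _ (mem_limOmega1_lift_iff.2 hγ)).1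
    rw [← image_lift_Iio] at hXγ
    exact (image_preimage_eq_of_subset (hXγ.trans (image_subset_range _ _))).symm

lemma exists_clubWSeq_universe_iff :
    (∃ x : Ordinal.{u} → Set Ordinal.{u}, ClubWSeq x) ↔
      ∃ x : Ordinal.{v} → Set Ordinal.{v}, ClubWSeq x :=
  exists_clubWSeq_iff_lift.{u, v}.trans exists_clubWSeq_iff_lift.{v, u}.symm

end Lift

lemma isClubIn_Iio_omega1 : IsClubIn (Iio ω₁) :=
  ⟨subset_rfl, fun _ hδ _ _ => hδ, fun α hα => ⟨succ α, isSuccLimit_omega1.succ_lt hα, lt_succ α⟩⟩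

lemma ClubWDaggerSeq.clubWSeq {x : Ordinal → Set Ordinal} (hx : ClubWDaggerSeq x) :
    ClubWSeq x := by
  refine ⟨hx.1, fun y hy hcard => ?_⟩
  obtain ⟨γ, ⟨hγ, hfin⟩, -⟩ := (hx.2 y hy hcard).2 _ isClubIn_Iio_omega1
  exact ⟨γ, hγ, hfin⟩

theorem clubWSeq_iff_clubWDaggerSeq :
    (∀ x, ClubWSeq x → ClubWDaggerSeq x) ∧
      ((∃ x, ClubWSeq x) ↔ ∃ x, ClubWDaggerSeq x) := by
  refine ⟨fun _ => ClubWSeq.clubWDaggerSeq, fun ⟨x, hx⟩ => ?_, fun ⟨x, hx⟩ => ?_⟩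
  · obtain ⟨x', hx'⟩ := exists_clubWSeq_universe_iff.1 ⟨x, hx⟩
    exact ⟨x', hx'.clubWDaggerSeq⟩
  · exact exists_clubWSeq_universe_iff.1 ⟨x, hx.clubWSeq⟩
end
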